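/- If an interval exchange map T satisfies Condition (A) (for every ε > 0 there is C_ε with ‖A(k,k+1)‖ ≤ C_ε‖A(k)‖^ε for all k ≥ 1) then the length data at the MMY acceleration times satisfy: for every ε > 0 there is C_ε such that 1/‖A(k)‖ ≤ max_α λ_α(m_k) ≤ C_ε · min_α λ_α(m_k) · ‖A(k)‖^ε for all k. -/

import Mathlib

/-! Rauzy–Veech induction for interval exchange maps: combinatorial data,
length data, the elementary Rauzy step, cocycle matrices, and acceleration times. -/

/-- Combinatorial data of an interval exchange map: two bijections ("top" and
"bottom") from the alphabet onto positions (0-indexed; position `card A - 1`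
is the last one). -/
structure IETComb (A : Type) [Fintype A] where
  pt : A ≃ Fin (Fintype.card A)
  pb : A ≃ Fin (Fintype.card A)

/-- Full data of an interval exchange map: combinatorial data plus length data. -/
structure IETData (A : Type) [Fintype A] extends IETComb A where
  lam : A → ℝ

variable {A : Type} [Fintype A] [DecidableEq A] [Nonempty A]

/-- The last position. -/
def lastIdx (A : Type) [Fintype A] [Nonempty A] : Fin (Fintype.card A) :=
  ⟨Fintype.card A - 1, Nat.sub_lt Fintype.card_pos Nat.one_pos⟩

/-- The letter in the last position of the top row. -/
def topLetter (c : IETComb A) : A := c.pt.symm (lastIdx A)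

/-- The letter in the last position of the bottom row. -/
def botLetter (c : IETComb A) : A := c.pb.symm (lastIdx A)

/-- The combinatorial Rauzy operation of top type `R_t`: the top row is unchanged and
the bottom row is rearranged so that the bottom-last letter is moved to just after the
position of the top-last letter. -/
def TopComb (c c' : IETComb A) : Prop :=
  c'.pt = c.pt ∧
  ∀ β : A, (c'.pb β : ℕ) =
    if (c.pb β : ℕ) ≤ (c.pb (topLetter c) : ℕ) then (c.pb β : ℕ)
    else if β = botLetter c then (c.pb (topLetter c) : ℕ) + 1
    else (c.pb β : ℕ) + 1

/-- The combinatorial Rauzy operation of bottom type `R_b`. -/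
def BotComb (c c' : IETComb A) : Prop :=
  c'.pb = c.pb ∧
  ∀ β : A, (c'.pt β : ℕ) =
    if (c.pt β : ℕ) ≤ (c.pt (botLetter c) : ℕ) then (c.pt β : ℕ)
    else if β = topLetter c then (c.pt (botLetter c) : ℕ) + 1
    else (c.pt β : ℕ) + 1

/-- One step of Rauzy–Veech induction, recording the winner and the loser. -/
def RVStep (D D' : IETData A) (win lose : A) : Prop :=
  (win = topLetter D.toIETComb ∧ lose = botLetter D.toIETComb ∧
    D.lam lose < D.lam win ∧ TopComb D.toIETComb D'.toIETComb ∧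
    D'.lam = Function.update D.lam win (D.lam win - D.lam lose)) ∨
  (win = botLetter D.toIETComb ∧ lose = topLetter D.toIETComb ∧
    D.lam lose < D.lam win ∧ BotComb D.toIETComb D'.toIETComb ∧
    D'.lam = Function.update D.lam win (D.lam win - D.lam lose))

/-- The elementary Rauzy matrix `B_γ = I + E_{loser, winner}` of the i-th arrow. -/
def Bmat (win lose : ℕ → A) (i : ℕ) : Matrix A A ℕ :=
  1 + Matrix.single (lose i) (win i) 1

/-- The cocycle matrix `Q(m,n) = B_{γ_{n-1}} ⋯ B_{γ_m}` along the Rauzy path. -/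
def Qmat (win lose : ℕ → A) (m n : ℕ) : Matrix A A ℕ :=
  (((List.range' m (n - m)).map (Bmat win lose)).reverse).prod

/-- The norm of a matrix: the sum of the absolute values of its entries. -/
noncomputable def matNorm (Q : Matrix A A ℕ) : ℝ := ∑ a, ∑ b, (Q a b : ℝ)

/-- `nk` is the sequence of Zorich acceleration times of the Rauzy path with winners
`win`: `n_0 = 0` and `γ(n_k, n_{k+1})` is the longest path all of whose arrows have the
same winner. -/
def ZorichTimes (win : ℕ → A) (nk : ℕ → ℕ) : Prop :=
  nk 0 = 0 ∧ StrictMono nk ∧ ∀ k : ℕ,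
    (∀ i : ℕ, nk k ≤ i → i < nk (k + 1) → win i = win (nk k)) ∧
    win (nk (k + 1)) ≠ win (nk k)

/-- `mk` is the sequence of Marmi–Moussa–Yoccoz acceleration times: `m_0 = 0` and
`m_{k+1} > m_k` is the largest integer such that not all letters are taken as winner
by the arrows in `γ(m_k, m_{k+1})`. -/
def MMYTimes (win : ℕ → A) (mk : ℕ → ℕ) : Prop :=
  mk 0 = 0 ∧ StrictMono mk ∧ ∀ k : ℕ,
    (Finset.Ico (mk k) (mk (k + 1))).image win ≠ Finset.univ ∧
    (Finset.Icc (mk k) (mk (k + 1))).image win = Finset.univ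

/-!
Write `λ(n)` for the lengths after `n` Rauzy–Veech steps. The lengths obey the cocycle relation
`λ(m) = Q(m, n)ᵀ λ(n)`; summing it at `m = 0` gives `1 ≤ ‖A(k)‖ · max λ(m_k)`.

A winner stays in the last position of its row, so at the next step it either wins again
or loses. Hence, along a stretch of the path on which the set of rows with a positive entry
in a fixed column of `Q(m_k, ·)` does not grow, that set is closed under going back from
winner to winner; since two consecutive MMY blocks each see every letter win, the set
grows in every three blocks until it is everything. So, with `d` letters, `Q(m_k, m_{k+3d})`
is positive, and the cocycle relation makes the lengths at `m_k` balanced up to the factor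
`‖Q(m_k, m_{k+3d})‖`.

Finally, Condition (A) says `‖A(k,k+1)‖` is smaller than every power `‖A(k)‖^ε`; since
`‖A(k+1)‖ ≤ ‖A(k,k+1)‖ ‖A(k)‖`, this propagates to `‖Q(m_k, m_{k+J})‖` for each fixed `J`.
-/

namespace RVStep

variable {D D' D'' : IETData A} {w l w' l' : A}

theorem lam_lose_lt_lam_win (h : RVStep D D' w l) : D.lam l < D.lam w := by
  rcases h with ⟨_, _, h, _⟩ | ⟨_, _, h, _⟩ <;> exact h

theorem lose_ne_win (h : RVStep D D' w l) : l ≠ w := fun hlw =>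
  (hlw ▸ h.lam_lose_lt_lam_win).false

theorem lam_eq (h : RVStep D D' w l) :
    D'.lam = Function.update D.lam w (D.lam w - D.lam l) := by
  rcases h with ⟨_, _, _, _, h⟩ | ⟨_, _, _, _, h⟩ <;> exact h

theorem lam_apply (h : RVStep D D' w l) (a : A) :
    D.lam a = D'.lam a + if a = w then D'.lam l else 0 := by
  rw [h.lam_eq, Function.update_of_ne h.lose_ne_win, Function.update_apply]
  split_ifs with ha <;> simp [ha]

theorem winner_persists (h : RVStep D D' w l) (h' : RVStep D' D'' w' l') : w' = w ∨ l' = w := by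
  rcases h with ⟨hw, -, -, ⟨hpt, -⟩, -⟩ | ⟨hw, -, -, ⟨hpb, -⟩, -⟩
  · have htop : topLetter D'.toIETComb = w := by rw [hw, topLetter, topLetter, hpt]
    rcases h' with ⟨hw', -⟩ | ⟨-, hl', -⟩
    · exact .inl (hw'.trans htop)
    · exact .inr (hl'.trans htop)
  · have hbot : botLetter D'.toIETComb = w := by rw [hw, botLetter, botLetter, hpb]
    rcases h' with ⟨-, hl', -⟩ | ⟨hw', -⟩
    · exact .inr (hl'.trans hbot)
    · exact .inl (hw'.trans hbot)

end RVStep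

section matNorm

variable {ι : Type} [Fintype ι]

theorem matNorm_nonneg (Q : Matrix ι ι ℕ) : 0 ≤ matNorm Q := by
  unfold matNorm
  positivity

theorem colSum_le_matNorm (Q : Matrix ι ι ℕ) (b : ι) : ∑ a, (Q a b : ℝ) ≤ matNorm Q :=
  Finset.sum_le_sum fun a _ =>
    Finset.single_le_sum (f := fun c => (Q a c : ℝ)) (fun _ _ => by positivity) (Finset.mem_univ b)

theorem apply_le_matNorm (Q : Matrix ι ι ℕ) (a b : ι) : (Q a b : ℝ) ≤ matNorm Q :=
  (Finset.single_le_sum (f := fun c => (Q c b : ℝ)) (fun _ _ => by positivity)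
    (Finset.mem_univ a)).trans (colSum_le_matNorm Q b)

theorem matNorm_eq_sum_colSum (Q : Matrix ι ι ℕ) : matNorm Q = ∑ b, ∑ a, (Q a b : ℝ) :=
  Finset.sum_comm

theorem matNorm_mul_le (P Q : Matrix ι ι ℕ) : matNorm (P * Q) ≤ matNorm P * matNorm Q := by
  have expand : matNorm (P * Q) = ∑ c, (∑ a, (P a c : ℝ)) * ∑ b, (Q c b : ℝ) := by
    simp only [matNorm, Matrix.mul_apply, Nat.cast_sum, Nat.cast_mul, Finset.sum_mul_sum]
    exact (Finset.sum_congr rfl fun _ _ => Finset.sum_comm).trans Finset.sum_comm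
  calc matNorm (P * Q) = ∑ c, (∑ a, (P a c : ℝ)) * ∑ b, (Q c b : ℝ) := expand
    _ ≤ ∑ c, matNorm P * ∑ b, (Q c b : ℝ) :=
      Finset.sum_le_sum fun c _ => by gcongr; exact colSum_le_matNorm P c
    _ = matNorm P * matNorm Q := by rw [← Finset.mul_sum]; rfl

end matNorm

section Qmat

variable {ι : Type} [Fintype ι] [DecidableEq ι] (win lose : ℕ → ι)

theorem Qmat_of_le {m n : ℕ} (h : n ≤ m) : Qmat win lose m n = 1 := by
  simp [Qmat, Nat.sub_eq_zero_of_le h]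

theorem Qmat_succ {m n : ℕ} (h : m ≤ n) :
    Qmat win lose m (n + 1) = Bmat win lose n * Qmat win lose m n := by
  rw [Qmat, Qmat, show n + 1 - m = n - m + 1 by omega, List.range'_concat,
    show m + 1 * (n - m) = n by omega, List.map_append, List.reverse_append]
  simp

theorem Qmat_trans {m t u : ℕ} (hmt : m ≤ t) (htu : t ≤ u) :
    Qmat win lose m u = Qmat win lose t u * Qmat win lose m t := by
  rw [Qmat, Qmat, Qmat, show u - m = t - m + (u - t) by omega, ← List.range'_append,
    show m + 1 * (t - m) = t by omega, List.map_append, List.reverse_append, List.prod_append]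

theorem Bmat_mul_apply (i : ℕ) (Q : Matrix ι ι ℕ) (γ a : ι) :
    (Bmat win lose i * Q) γ a = Q γ a + if γ = lose i then Q (win i) a else 0 := by
  rw [Bmat, Matrix.add_mul, Matrix.one_mul, Matrix.add_apply]
  by_cases h : γ = lose i
  · subst h
    rw [if_pos rfl, Matrix.single_mul_apply_same, one_mul]
  · rw [if_neg h, Matrix.single_mul_apply_of_ne _ _ _ _ _ h]

theorem Qmat_apply_mono (m : ℕ) (γ a : ι) : Monotone fun n => Qmat win lose m n γ a := by
  refine monotone_nat_of_le_succ fun n => ?_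
  rcases le_or_gt m n with h | h
  · simp only [Qmat_succ win lose h, Bmat_mul_apply]
    exact Nat.le_add_right _ _
  · rw [Qmat_of_le win lose h.le, Qmat_of_le win lose h]

theorem one_le_Qmat_apply_self (m n : ℕ) (a : ι) : 1 ≤ Qmat win lose m n a a := by
  rcases le_or_gt m n with h | h
  · calc 1 = Qmat win lose m m a a := by rw [Qmat_of_le win lose le_rfl, Matrix.one_apply_eq]
      _ ≤ Qmat win lose m n a a := Qmat_apply_mono win lose m a a h
  · rw [Qmat_of_le win lose h.le, Matrix.one_apply_eq]

theorem matNorm_Qmat_le_mul {m t u : ℕ} (hmt : m ≤ t) (htu : t ≤ u) :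
    matNorm (Qmat win lose m u) ≤ matNorm (Qmat win lose t u) * matNorm (Qmat win lose m t) :=
  Qmat_trans win lose hmt htu ▸ matNorm_mul_le _ _

theorem one_le_matNorm_Qmat [Nonempty ι] (m n : ℕ) : 1 ≤ matNorm (Qmat win lose m n) := by
  obtain ⟨a⟩ := ‹Nonempty ι›
  exact le_trans (by exact_mod_cast one_le_Qmat_apply_self win lose m n a)
    (apply_le_matNorm _ a a)

end Qmat

section Lengths

variable {Ds : ℕ → IETData A} {win lose : ℕ → A}

theorem lam_eq_sum_Qmat (hRV : ∀ n, RVStep (Ds n) (Ds (n + 1)) (win n) (lose n))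
    {m n : ℕ} (h : m ≤ n) (a : A) :
    (Ds m).lam a = ∑ γ, (Qmat win lose m n γ a : ℝ) * (Ds n).lam γ := by
  induction n, h using Nat.le_induction with
  | base => simp [Qmat_of_le win lose le_rfl, Matrix.one_apply]
  | succ n hmn ih =>
    simp only [ih, (hRV n).lam_apply, Qmat_succ win lose hmn, Bmat_mul_apply, Nat.cast_add,
      Nat.cast_ite, Nat.cast_zero, mul_add, add_mul, ite_mul, mul_ite, zero_mul, mul_zero,
      Finset.sum_add_distrib, Finset.sum_ite_eq', Finset.mem_univ, if_true]

theorem iSup_lam_le_matNorm_mul_iInf_lam (hRV : ∀ n, RVStep (Ds n) (Ds (n + 1)) (win n) (lose n))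
    (hpos : ∀ n a, 0 < (Ds n).lam a) {m n : ℕ} (hmn : m ≤ n)
    (hQ : ∀ γ β, 0 < Qmat win lose m n γ β) :
    ⨆ a, (Ds m).lam a ≤ matNorm (Qmat win lose m n) * ⨅ a, (Ds m).lam a := by
  set Q := Qmat win lose m n
  set σ := ⨆ γ, (Ds n).lam γ
  have hbdd : BddAbove (Set.range (Ds n).lam) := (Set.finite_range _).bddAbove
  have hσ : 0 ≤ σ := (hpos n (Classical.arbitrary A)).le.trans (le_ciSup hbdd _)
  have hlow : ∀ β, σ ≤ (Ds m).lam β := fun β => by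
    rw [lam_eq_sum_Qmat hRV hmn]
    calc σ ≤ ∑ γ, (Ds n).lam γ :=
          ciSup_le fun γ => Finset.single_le_sum (fun x _ => (hpos n x).le) (Finset.mem_univ γ)
      _ ≤ ∑ γ, (Q γ β : ℝ) * (Ds n).lam γ := Finset.sum_le_sum fun γ _ =>
          le_mul_of_one_le_left (hpos n γ).le (by exact_mod_cast hQ γ β)
  have hup : ∀ α, (Ds m).lam α ≤ matNorm Q * σ := fun α => by
    rw [lam_eq_sum_Qmat hRV hmn]
    calc ∑ γ, (Q γ α : ℝ) * (Ds n).lam γ ≤ ∑ γ, (Q γ α : ℝ) * σ := by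
          gcongr with γ; exact le_ciSup hbdd γ
      _ = (∑ γ, (Q γ α : ℝ)) * σ := (Finset.sum_mul ..).symm
      _ ≤ matNorm Q * σ := mul_le_mul_of_nonneg_right (colSum_le_matNorm Q α) hσ
  exact ciSup_le fun α =>
    (hup α).trans (mul_le_mul_of_nonneg_left (le_ciInf hlow) (matNorm_nonneg Q))

theorem one_div_matNorm_Qmat_le_iSup_lam (hRV : ∀ n, RVStep (Ds n) (Ds (n + 1)) (win n) (lose n))
    (hnorm : ∑ a, (Ds 0).lam a = 1) (n : ℕ) :
    1 / matNorm (Qmat win lose 0 n) ≤ ⨆ a, (Ds n).lam a := by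
  rw [div_le_iff₀ (zero_lt_one.trans_le (one_le_matNorm_Qmat win lose 0 n))]
  calc 1 = ∑ a, ∑ γ, (Qmat win lose 0 n γ a : ℝ) * (Ds n).lam γ := by
        rw [← hnorm]; exact Finset.sum_congr rfl fun a _ => lam_eq_sum_Qmat hRV n.zero_le a
    _ ≤ ∑ a, ∑ γ, (Qmat win lose 0 n γ a : ℝ) * ⨆ x, (Ds n).lam x := by
        gcongr with a _ γ; exact le_ciSup (Set.finite_range _).bddAbove γ
    _ = (⨆ a, (Ds n).lam a) * matNorm (Qmat win lose 0 n) := by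
        simp_rw [matNorm_eq_sum_colSum, Finset.mul_sum, mul_comm]

end Lengths

theorem Finset.eq_univ_of_ssubset_or_eq_univ {α : Type*} [Fintype α] {s : ℕ → Finset α}
    (hgrow : ∀ i, s i ⊂ s (i + 1) ∨ s (i + 1) = Finset.univ) :
    s (Fintype.card α) = Finset.univ := by
  have hcard : ∀ i, min i (Fintype.card α) ≤ (s i).card := by
    intro i
    induction i with
    | zero => simp
    | succ i ih =>
      rcases hgrow i with h | h
      · have := Finset.card_lt_card h
        omega
      · rw [h, Finset.card_univ]
        omega
  exact Finset.eq_univ_of_card _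
    (le_antisymm (Finset.card_le_univ _) (by simpa using hcard (Fintype.card α)))

section Positivity

theorem win_mem_of_le_of_win_mem {ι : Type} {win lose : ℕ → ι} {T : Finset ι}
    (hws : ∀ t, win (t + 1) = win t ∨ lose (t + 1) = win t) {a v : ℕ}
    (hclosed : ∀ t, a ≤ t → t ≤ v → win t ∈ T → lose t ∈ T) (hv : win v ∈ T)
    {t : ℕ} (hat : a ≤ t) (htv : t ≤ v) : win t ∈ T := by
  induction htv using Nat.decreasingInduction with
  | self => exact hv
  | of_succ t htv ih =>
    rcases hws t with h | h
    · exact h ▸ ih (by omega)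
    · exact h ▸ hclosed (t + 1) (by omega) htv (ih (by omega))

variable {ι : Type} [Fintype ι]

def posRows (Q : Matrix ι ι ℕ) (β : ι) : Finset ι := Finset.univ.filter fun x => 0 < Q x β

theorem mem_posRows {Q : Matrix ι ι ℕ} {β x : ι} : x ∈ posRows Q β ↔ 0 < Q x β := by
  simp [posRows]

variable [DecidableEq ι] {win lose : ℕ → ι}

theorem posRows_Qmat_mono {m t t' : ℕ} (h : t ≤ t') (β : ι) :
    posRows (Qmat win lose m t) β ⊆ posRows (Qmat win lose m t') β := fun x hx =>
  mem_posRows.mpr (mem_posRows.mp hx |>.trans_le (Qmat_apply_mono win lose m x β h))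

theorem lose_mem_posRows_Qmat_succ {m t : ℕ} (hmt : m ≤ t) {β : ι}
    (hw : win t ∈ posRows (Qmat win lose m t) β) :
    lose t ∈ posRows (Qmat win lose m (t + 1)) β := by
  rw [mem_posRows] at hw ⊢
  rw [Qmat_succ win lose hmt, Bmat_mul_apply, if_pos rfl]
  omega

theorem posRows_Qmat_ssubset_or_eq_univ (hws : ∀ t, win (t + 1) = win t ∨ lose (t + 1) = win t)
    {m a b c : ℕ} (hma : m ≤ a) (hab : a ≤ b) (hbc : b ≤ c)
    (hwin₁ : ∀ x, ∃ t ∈ Finset.Icc a b, win t = x) (hwin₂ : ∀ x, ∃ t ∈ Finset.Icc b c, win t = x)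
    (β : ι) :
    posRows (Qmat win lose m a) β ⊂ posRows (Qmat win lose m (c + 1)) β ∨
      posRows (Qmat win lose m (c + 1)) β = Finset.univ := by
  rcases (posRows_Qmat_mono (win := win) (lose := lose) (m := m) (show a ≤ c + 1 by omega) β)
    |>.ssubset_or_eq with h | h
  · exact .inl h
  right
  set T := posRows (Qmat win lose m a) β
  -- On `[a, c + 1]` the rows stay `T`, so `T` is closed under passing from winner to loser.
  have hconst : ∀ t, a ≤ t → t ≤ c + 1 → posRows (Qmat win lose m t) β = T := fun t h₁ h₂ =>
    subset_antisymm (h.symm ▸ posRows_Qmat_mono h₂ β) (posRows_Qmat_mono h₁ β)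
  obtain ⟨v, hv, hwv⟩ := hwin₂ β
  rw [Finset.mem_Icc] at hv
  have hβ : win v ∈ T := hwv ▸ mem_posRows.mpr (one_le_Qmat_apply_self win lose m a β)
  have hclosed : ∀ t, a ≤ t → t ≤ v → win t ∈ T → lose t ∈ T := fun t h₁ h₂ hw => by
    rw [← hconst (t + 1) (by omega) (by omega)]
    exact lose_mem_posRows_Qmat_succ (by omega) ((hconst t h₁ (by omega)).symm ▸ hw)
  rw [← h]
  refine Finset.eq_univ_of_forall fun x => ?_
  obtain ⟨t, ht, rfl⟩ := hwin₁ x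
  rw [Finset.mem_Icc] at ht
  exact win_mem_of_le_of_win_mem hws hclosed hβ ht.1 (by omega)

theorem Qmat_mk_apply_pos (hws : ∀ t, win (t + 1) = win t ∨ lose (t + 1) = win t) {mk : ℕ → ℕ}
    (hMMY : MMYTimes win mk) (k : ℕ) (γ β : ι) :
    0 < Qmat win lose (mk k) (mk (k + 3 * Fintype.card ι)) γ β := by
  have hmk := hMMY.2.1
  have hwin : ∀ j x, ∃ t ∈ Finset.Icc (mk j) (mk (j + 1)), win t = x := fun j x =>
    Finset.mem_image.mp ((hMMY.2.2 j).2 ▸ Finset.mem_univ x)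
  set s := fun i => posRows (Qmat win lose (mk k) (mk (k + 3 * i))) β
  have hs : s (Fintype.card ι) = Finset.univ := Finset.eq_univ_of_ssubset_or_eq_univ fun i => by
    have hsub : posRows (Qmat win lose (mk k) (mk (k + 3 * i + 1 + 1) + 1)) β ⊆ s (i + 1) :=
      posRows_Qmat_mono (hmk (show k + 3 * i + 1 + 1 < k + 3 * (i + 1) by omega)) β
    rcases posRows_Qmat_ssubset_or_eq_univ hws (hmk.monotone (show k ≤ k + 3 * i by omega))
      (hmk.monotone (Nat.le_succ _)) (hmk.monotone (Nat.le_succ _)) (hwin (k + 3 * i))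
      (hwin (k + 3 * i + 1)) β with h | h
    · exact .inl (h.trans_subset hsub)
    · exact .inr (Finset.univ_subset_iff.mp (h ▸ hsub))
  have hγ : γ ∈ s (Fintype.card ι) := hs ▸ Finset.mem_univ γ
  exact mem_posRows.mp hγ

end Positivity

def SubpolyBounded (N f : ℕ → ℝ) : Prop :=
  ∀ ε : ℝ, 0 < ε → ∃ C : ℝ, 0 < C ∧ ∀ k, f k ≤ C * N k ^ ε

namespace SubpolyBounded

variable {N M f g h : ℕ → ℝ}

theorem of_forall_one_le (hN : ∀ k, 1 ≤ N k)
    (hf : ∀ ε : ℝ, 0 < ε → ∃ C : ℝ, 0 < C ∧ ∀ k, 1 ≤ k → f k ≤ C * N k ^ ε) :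
    SubpolyBounded N f := by
  intro ε hε
  obtain ⟨C, hC, hfC⟩ := hf ε hε
  refine ⟨max C (f 0), lt_max_of_lt_left hC, fun k => ?_⟩
  rcases Nat.eq_zero_or_pos k with rfl | hk
  · exact (le_max_right C (f 0)).trans
      (le_mul_of_one_le_right (by positivity) (Real.one_le_rpow (hN 0) hε.le))
  · have : 0 ≤ N k ^ ε := Real.rpow_nonneg (zero_le_one.trans (hN k)) ε
    exact (hfC k hk).trans (by gcongr; exact le_max_left C (f 0))

theorem const (hN : ∀ k, 1 ≤ N k) (c : ℝ) : SubpolyBounded N fun _ => c := fun ε hε =>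
  ⟨max c 1, by positivity, fun k => (le_max_left c 1).trans
    (le_mul_of_one_le_right (by positivity) (Real.one_le_rpow (hN k) hε.le))⟩

theorem mono (hf : SubpolyBounded N f) (hgf : ∀ k, g k ≤ f k) : SubpolyBounded N g :=
  fun ε hε => (hf ε hε).imp fun _ ⟨hC, hfC⟩ => ⟨hC, fun k => (hgf k).trans (hfC k)⟩

theorem comp_add (hf : SubpolyBounded N f) (j : ℕ) :
    SubpolyBounded (fun k => N (k + j)) fun k => f (k + j) :=
  fun ε hε => (hf ε hε).imp fun _ ⟨hC, hfC⟩ => ⟨hC, fun k => hfC (k + j)⟩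

theorem mul (hN : ∀ k, 0 < N k) (hf : SubpolyBounded N f) (hg : SubpolyBounded N g)
    (hg₀ : ∀ k, 0 ≤ g k) : SubpolyBounded N (f * g) := by
  intro ε hε
  obtain ⟨C₁, hC₁, hfC⟩ := hf (ε / 2) (by positivity)
  obtain ⟨C₂, hC₂, hgC⟩ := hg (ε / 2) (by positivity)
  refine ⟨C₁ * C₂, by positivity, fun k => ?_⟩
  have hNk := hN k
  calc f k * g k ≤ C₁ * N k ^ (ε / 2) * (C₂ * N k ^ (ε / 2)) :=
        mul_le_mul (hfC k) (hgC k) (hg₀ k) (by positivity)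
    _ = C₁ * C₂ * N k ^ ε := by
        rw [mul_mul_mul_comm, ← Real.rpow_add hNk, add_halves]

/-- Here `M ≤ C N ^ 2`, so `M ^ (ε / 2) ≤ C' N ^ ε`. -/
theorem of_le_mul (hN : ∀ k, 0 < N k) (hg : SubpolyBounded M g) (hM₀ : ∀ k, 0 ≤ M k)
    (hh : SubpolyBounded N h) (hMN : ∀ k, M k ≤ h k * N k) : SubpolyBounded N g := by
  intro ε hε
  obtain ⟨C₁, hC₁, hgC⟩ := hg (ε / 2) (by positivity)
  obtain ⟨C₂, hC₂, hhC⟩ := hh 1 one_pos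
  refine ⟨C₁ * C₂ ^ (ε / 2), by positivity, fun k => ?_⟩
  have hNk := hN k
  have hMk : M k ≤ C₂ * N k ^ (2 : ℝ) :=
    calc M k ≤ h k * N k := hMN k
      _ ≤ C₂ * N k ^ (1 : ℝ) * N k := by gcongr; exact hhC k
      _ = C₂ * N k ^ (2 : ℝ) := by
        rw [mul_assoc, ← Real.rpow_add_one hNk.ne']; norm_num
  calc g k ≤ C₁ * M k ^ (ε / 2) := hgC k
    _ ≤ C₁ * (C₂ * N k ^ (2 : ℝ)) ^ (ε / 2) := by gcongr; exact hM₀ k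
    _ = C₁ * C₂ ^ (ε / 2) * N k ^ ε := by
        rw [Real.mul_rpow hC₂.le (by positivity), ← Real.rpow_mul hNk.le, mul_assoc]
        ring_nf

end SubpolyBounded

section ConditionA

variable {ι : Type} [Fintype ι] [DecidableEq ι] [Nonempty ι] {win lose : ℕ → ι} {mk : ℕ → ℕ}

theorem subpolyBounded_matNorm_Qmat_mk (hmk : Monotone mk)
    (hA : SubpolyBounded (fun k => matNorm (Qmat win lose 0 (mk k)))
      fun k => matNorm (Qmat win lose (mk k) (mk (k + 1)))) (J : ℕ) :
    SubpolyBounded (fun k => matNorm (Qmat win lose 0 (mk k)))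
      fun k => matNorm (Qmat win lose (mk k) (mk (k + J))) := by
  have hN : ∀ k, 1 ≤ matNorm (Qmat win lose 0 (mk k)) := fun k => one_le_matNorm_Qmat win lose _ _
  have hNpos : ∀ k, 0 < matNorm (Qmat win lose 0 (mk k)) := fun k => zero_lt_one.trans_le (hN k)
  induction J with
  | zero => simpa only [add_zero, Qmat_of_le win lose le_rfl] using SubpolyBounded.const hN _
  | succ J ih =>
    have hlast := (hA.comp_add J).of_le_mul hNpos (fun k => (hNpos _).le) ih fun k =>
      matNorm_Qmat_le_mul win lose (Nat.zero_le _) (hmk (Nat.le_add_right k J))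
    exact (hlast.mul hNpos ih fun k => matNorm_nonneg _).mono fun k =>
      matNorm_Qmat_le_mul win lose (hmk (Nat.le_add_right k J)) (hmk (Nat.le_succ _))

end ConditionA

/-- if an interval exchange map (normalized to total length 1) satisfies
Condition (A) (for every ε > 0 there is C_ε with ‖A(k,k+1)‖ ≤ C_ε ‖A(k)‖^ε for all
k ≥ 1, where A(k) = Q(0, m_k) is the MMY cocycle), then for every ε > 0 there is C_ε
such that 1/‖A(k)‖ ≤ max_α λ_α(m_k) ≤ C_ε · min_α λ_α(m_k) · ‖A(k)‖^ε for all k. -/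
theorem conditionA_length_balance
    (Ds : ℕ → IETData A) (win lose : ℕ → A)
    (hRV : ∀ n : ℕ, RVStep (Ds n) (Ds (n + 1)) (win n) (lose n))
    (hpos : ∀ n a, 0 < (Ds n).lam a)
    (hnorm : ∑ a, (Ds 0).lam a = 1)
    (mk : ℕ → ℕ) (hMMY : MMYTimes win mk)
    (hA : ∀ ε : ℝ, 0 < ε → ∃ C : ℝ, 0 < C ∧ ∀ k : ℕ, 1 ≤ k →
      matNorm (Qmat win lose (mk k) (mk (k + 1))) ≤
        C * matNorm (Qmat win lose 0 (mk k)) ^ ε) :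
    ∀ ε : ℝ, 0 < ε → ∃ C : ℝ, 0 < C ∧ ∀ k : ℕ,
      1 / matNorm (Qmat win lose 0 (mk k)) ≤ (⨆ a, (Ds (mk k)).lam a) ∧
      (⨆ a, (Ds (mk k)).lam a) ≤
        C * (⨅ a, (Ds (mk k)).lam a) * matNorm (Qmat win lose 0 (mk k)) ^ ε := by
  intro ε hε
  have hmk := hMMY.2.1.monotone
  have hA' := SubpolyBounded.of_forall_one_le (fun k => one_le_matNorm_Qmat win lose 0 (mk k)) hA
  obtain ⟨C, hC, hbound⟩ :=
    subpolyBounded_matNorm_Qmat_mk hmk hA' (3 * Fintype.card A) ε hε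
  have hQpos := Qmat_mk_apply_pos (fun t => (hRV t).winner_persists (hRV (t + 1))) hMMY
  refine ⟨C, hC, fun k => ⟨one_div_matNorm_Qmat_le_iSup_lam hRV hnorm (mk k), ?_⟩⟩
  have hinf : 0 ≤ ⨅ a, (Ds (mk k)).lam a := le_ciInf fun a => (hpos _ a).le
  calc ⨆ a, (Ds (mk k)).lam a
      ≤ matNorm (Qmat win lose (mk k) (mk (k + 3 * Fintype.card A))) * ⨅ a, (Ds (mk k)).lam a :=
        iSup_lam_le_matNorm_mul_iInf_lam hRV hpos (hmk (Nat.le_add_right _ _)) (hQpos k)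
    _ ≤ C * matNorm (Qmat win lose 0 (mk k)) ^ ε * ⨅ a, (Ds (mk k)).lam a :=
        mul_le_mul_of_nonneg_right (hbound k) hinf
    _ = C * (⨅ a, (Ds (mk k)).lam a) * matNorm (Qmat win lose 0 (mk k)) ^ ε := by ring
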